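/- arXiv:2412.03487 — 8 statements merged into one kernel-verified Lean document; each statement's English description precedes it below -/
import Mathlib

section
/- Let T be a finite set, p_t a time-dependent probability mass function on T, and j_t : T × T → ℝ a flux satisfying: (i) the discrete continuity equation ∂_t p_t(x) + Σ_{z≠x} j_t(z,x) − Σ_{z≠x} j_t(x,z) = 0 for all x; (ii) j_t(x,z) ≥ 0 for x ≠ z; (iii) p_t(z) = 0 implies j_t(x,z) = 0 for all x. Define u_t(x,z) = j_t(x,z)/p_t(z) if p_t(z) > 0 and u_t(x,z) = 0 otherwise, for x ≠ z, and u_t(z,z) = −Σ_{x≠z} u_t(x,z). Then u_t satisfies the rate conditions (u_t(x,z) ≥ 0 for x ≠ z and Σ_x u_t(x,z) = 0) and the Kolmogorov forward equation ∂_t p_t(x) = Σ_z u_t(x,z) p_t(z) holds for all x. -/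
/-!
Off the diagonal `u x z * p z = j x z`: for `p z > 0` by construction, and for `p z = 0` because
the flux is safe. The diagonal term `u x x * p x` is then minus the inflow into `x`, so
`∑ z, u x z * p z` is the net outflow `-div_x j`, which the continuity equation identifies with
`∂ₜ p(x)`.
-/

open Finset

section RateFromFlux

variable {T : Type*} [Fintype T] [DecidableEq T]

def fluxDiv {R : Type*} [AddCommGroup R] (j : T → T → R) (x : T) : R :=
  (∑ z ∈ univ.erase x, j z x) - ∑ z ∈ univ.erase x, j x z

theorem sum_eq_zero_of_apply_eq_neg_sum_erase {M : Type*} [AddCommGroup M] {f : T → M} {z : T}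
    (h : f z = -∑ x ∈ univ.erase z, f x) : ∑ x, f x = 0 := by
  rw [← add_sum_erase _ _ (mem_univ z), h, neg_add_cancel]

theorem sum_mul_eq_neg_fluxDiv {R : Type*} [CommRing R] {j u : T → T → R} {p : T → R}
    (hmul : ∀ x z, x ≠ z → u x z * p z = j x z)
    (hdiag : ∀ z, u z z = -∑ x ∈ univ.erase z, u x z) (x : T) :
    ∑ z, u x z * p z = -fluxDiv j x := by
  have hout : ∑ z ∈ univ.erase x, u x z * p z = ∑ z ∈ univ.erase x, j x z :=
    sum_congr rfl fun z hz => hmul x z (ne_of_mem_erase hz).symm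
  have hin : u x x * p x = -∑ z ∈ univ.erase x, j z x := by
    rw [hdiag x, neg_mul, sum_mul]
    exact congrArg Neg.neg (sum_congr rfl fun z hz => hmul z x (ne_of_mem_erase hz))
  rw [← add_sum_erase _ _ (mem_univ x), hout, hin, fluxDiv, neg_sub, neg_add_eq_sub]

end RateFromFlux

section SafeDivision

variable {K : Type*} [Field K] [LinearOrder K] {a b : K}

theorem ite_pos_div_nonneg [IsStrictOrderedRing K] (ha : 0 ≤ a) : 0 ≤ if 0 < b then a / b else 0 := by
  split_ifs with hb
  exacts [div_nonneg ha hb.le, le_rfl]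

theorem ite_pos_div_mul_cancel (hb : 0 ≤ b) (hsafe : b = 0 → a = 0) :
    (if 0 < b then a / b else 0) * b = a := by
  rcases hb.lt_or_eq with hb | hb
  · rw [if_pos hb, div_mul_cancel₀ _ hb.ne']
  · rw [if_neg hb.not_lt, zero_mul, hsafe hb.symm]

end SafeDivision

theorem velocity_from_flux_general {T : Type*} [Fintype T] [DecidableEq T]
    (p dp : T → ℝ) (j u : T → T → ℝ)
    (hp : ∀ x, 0 ≤ p x)
    (hcont : ∀ x, dp x + ((∑ z ∈ Finset.univ.erase x, j z x)
        - ∑ z ∈ Finset.univ.erase x, j x z) = 0)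
    (hjnn : ∀ x z, x ≠ z → 0 ≤ j x z)
    (hsafe : ∀ x z, p z = 0 → j x z = 0)
    (hu_off : ∀ x z, x ≠ z → u x z = if 0 < p z then j x z / p z else 0)
    (hu_diag : ∀ z, u z z = - ∑ x ∈ Finset.univ.erase z, u x z) :
    (∀ x z, x ≠ z → 0 ≤ u x z) ∧
    (∀ z, ∑ x, u x z = 0) ∧
    (∀ x, dp x = ∑ z, u x z * p z) := by
  have hmul : ∀ x z, x ≠ z → u x z * p z = j x z := fun x z hxz => by
    rw [hu_off x z hxz]
    exact ite_pos_div_mul_cancel (hp z) (hsafe x z)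
  refine ⟨fun x z hxz => ?_, fun z => sum_eq_zero_of_apply_eq_neg_sum_erase (hu_diag z),
    fun x => ?_⟩
  · rw [hu_off x z hxz]
    exact ite_pos_div_nonneg (hjnn x z hxz)
  · rw [sum_mul_eq_neg_fluxDiv hmul hu_diag x]
    exact eq_neg_of_add_eq_zero_left (hcont x)

/-- Velocity obtained from a non-negative, safe flux satisfying the discrete
continuity equation satisfies the rate conditions and the Kolmogorov forward
equation. -/
theorem velocity_from_flux {T : Type*} [Fintype T] [DecidableEq T]
    (p dp : T → ℝ) (j u : T → T → ℝ)
    (hp : ∀ x, 0 ≤ p x) (hpsum : ∑ x, p x = 1)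
    (hcont : ∀ x, dp x + ((∑ z ∈ Finset.univ.erase x, j z x)
        - ∑ z ∈ Finset.univ.erase x, j x z) = 0)
    (hjnn : ∀ x z, x ≠ z → 0 ≤ j x z)
    (hsafe : ∀ x z, p z = 0 → j x z = 0)
    (hu_off : ∀ x z, x ≠ z → u x z = if 0 < p z then j x z / p z else 0)
    (hu_diag : ∀ z, u z z = - ∑ x ∈ Finset.univ.erase z, u x z) :
    (∀ x z, x ≠ z → 0 ≤ u x z) ∧
    (∀ z, ∑ x, u x z = 0) ∧
    (∀ x, dp x = ∑ z, u x z * p z) :=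
  velocity_from_flux_general p dp j u hp hcont hjnn hsafe hu_off hu_diag
end

section
/- Let T be a finite set, p_t(x) > 0 a differentiable probability path on T, and τ_t : T → ℝ_{≥0} with Σ_s τ_t(s) > 0. Then the function f_t(x) = (Σ_{s∈T} τ_t(s))^{-1} · ∂_t p_t(x)/τ_t(x) (when τ_t(x) > 0) solves the Laplacian-form linear system Σ_z τ_t(x)τ_t(z) (f_t(x) − f_t(z)) = ∂_t p_t(x) for all x ∈ T, provided τ_t(x) > 0 for all x. -/
/-!
With `S = ∑ z, τ z`, the system reads `τ x * (S * f x - ∑ z, τ z * f z) = dp x`. The closed form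
satisfies `τ z * f z = dp z / S`, so the weighted sum `∑ z, τ z * f z` vanishes because
`∑ z, dp z = 0`, and what is left is `τ x * S * f x = dp x`.
-/

open Finset

theorem sum_mul_mul_sub_eq {ι R : Type*} [Fintype ι] [CommRing R] (a g : ι → R) (x : ι) :
    ∑ z, a x * a z * (g x - g z) = a x * g x * ∑ z, a z - a x * ∑ z, a z * g z := by
  simp only [mul_sum, ← sum_sub_distrib]
  exact sum_congr rfl fun z _ ↦ by ring

theorem laplacian_eq_of_mul_eq_div_sum {ι K : Type*} [Fintype ι] [Field K] (τ f dp : ι → K)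
    (hdp : ∑ z, dp z = 0) (hτ : ∑ s, τ s ≠ 0) (hτf : ∀ z, τ z * f z = (∑ s, τ s)⁻¹ * dp z)
    (x : ι) : ∑ z, τ x * τ z * (f x - f z) = dp x := by
  have hweighted : ∑ z, τ z * f z = 0 := by simp only [hτf, ← mul_sum, hdp, mul_zero]
  rw [sum_mul_mul_sub_eq, hweighted, mul_zero, sub_zero, hτf x]
  field_simp

theorem closed_form_laplacian_solution_general {T : Type*} [Fintype T]
    (dp τ f : T → ℝ)
    (hdpsum : ∑ x, dp x = 0)
    (hτ : ∀ x, 0 < τ x) (hτsum : 0 < ∑ s, τ s)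
    (hf : ∀ x, f x = (∑ s, τ s)⁻¹ * (dp x / τ x)) :
    ∀ x, ∑ z, τ x * τ z * (f x - f z) = dp x := by
  refine laplacian_eq_of_mul_eq_div_sum τ f dp hdpsum hτsum.ne' fun z ↦ ?_
  rw [hf z, mul_left_comm, mul_div_cancel₀ _ (hτ z).ne']

/-- The closed-form function `f x = (∑ s, τ s)⁻¹ * dp x / τ x` solves the
Laplacian-form linear system `∑ z, τ x * τ z * (f x - f z) = dp x`. -/
theorem closed_form_laplacian_solution {T : Type*} [Fintype T] [DecidableEq T]
    (p dp τ f : T → ℝ)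
    (hp : ∀ x, 0 < p x) (hpsum : ∑ x, p x = 1)
    (hdpsum : ∑ x, dp x = 0)
    (hτ : ∀ x, 0 < τ x) (hτsum : 0 < ∑ s, τ s)
    (hf : ∀ x, f x = (∑ s, τ s)⁻¹ * (dp x / τ x)) :
    ∀ x, ∑ z, τ x * τ z * (f x - f z) = dp x :=
  closed_form_laplacian_solution_general dp τ f hdpsum hτ hτsum hf
end

section
/- Let T be a finite set and p_t a differentiable, strictly positive probability path on T. For the kinetic energy ∫_0^1 Σ_{x≠z} (1/(p_t(x) p_t(z))) j_t(x,z)^2 dt (corresponding to weights w_t(x,z) = 1/p_t(x)), the energy of the flux j*_t(x,z) = p_t(x)p_t(z)[∂_t log p_t(x) − ∂_t log p_t(z)]_+ equals ∫_0^1 Σ_x (∂_t p_t(x))^2 / p_t(x) dt = 4 ∫_0^1 Σ_x (d/dt √p_t(x))^2 dt; namely, for each t, Σ_{x,z} p_t(x)p_t(z) ([∂_t p_t(x)/p_t(x) − ∂_t p_t(z)/p_t(z)]_+)^2 = Σ_x (∂_t p_t(x))^2/p_t(x). -/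
open Finset

/-- Energy identity for the kinetic optimal flux with weights `w x z = 1 / p x`:
`∑_{x,z} p x * p z * ([dp x / p x - dp z / p z]₊)² = ∑ x, (dp x)² / p x`. -/
theorem kinetic_optimal_energy_identity {T : Type*} [Fintype T] [DecidableEq T]
    (p dp : T → ℝ)
    (hp : ∀ x, 0 < p x) (hpsum : ∑ x, p x = 1)
    (hdpsum : ∑ x, dp x = 0) :
    ∑ x, ∑ z, p x * p z * (max (dp x / p x - dp z / p z) 0) ^ 2
      = ∑ x, (dp x) ^ 2 / p x := by
  set a : T → ℝ := fun x => dp x / p x with ha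
  have hpa : ∀ x, p x * a x = dp x := fun x => by
    rw [ha]; field_simp; rw [mul_comm, mul_div_assoc, div_self (hp x).ne', mul_one]
  have hpa2 : ∀ x, p x * a x ^ 2 = dp x ^ 2 / p x := fun x => by
    have := (hp x).ne'
    field_simp [ha]
    rw [← hpa x]; ring
  have hsuma : ∑ x, p x * a x = 0 := by simp_rw [hpa]; exact hdpsum
  have hkey : ∀ u : ℝ, (max u 0) ^ 2 + (max (-u) 0) ^ 2 = u ^ 2 := by
    intro u
    rcases le_total u 0 with h | h
    · rw [max_eq_right h, max_eq_left (neg_nonneg.mpr h)]; ring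
    · rw [max_eq_left h, max_eq_right (neg_nonpos.mpr h)]; ring
  -- symmetric sum
  have hswap :
      ∑ x, ∑ z, p x * p z * (max (a x - a z) 0) ^ 2
        = ∑ x, ∑ z, p x * p z * (max (a z - a x) 0) ^ 2 := by
    rw [Finset.sum_comm]
    exact Finset.sum_congr rfl fun x _ => Finset.sum_congr rfl fun z _ => by ring
  have hdouble :
      2 * ∑ x, ∑ z, p x * p z * (max (a x - a z) 0) ^ 2
        = ∑ x, ∑ z, p x * p z * (a x - a z) ^ 2 := by
    rw [two_mul]
    nth_rewrite 2 [hswap]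
    rw [← Finset.sum_add_distrib]
    refine Finset.sum_congr rfl fun x _ => ?_
    rw [← Finset.sum_add_distrib]
    refine Finset.sum_congr rfl fun z _ => ?_
    have : max (a z - a x) 0 = max (-(a x - a z)) 0 := by ring_nf
    rw [this, ← mul_add, hkey]
  have hexpand :
      ∑ x, ∑ z, p x * p z * (a x - a z) ^ 2
        = (∑ x, p x * a x ^ 2) * (∑ z, p z)
          - 2 * (∑ x, p x * a x) * (∑ z, p z * a z)
          + (∑ x, p x) * (∑ z, p z * a z ^ 2) := by
    rw [Finset.sum_mul_sum, Finset.sum_mul_sum, mul_assoc, Finset.sum_mul_sum,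
      Finset.mul_sum, ← Finset.sum_sub_distrib, ← Finset.sum_add_distrib]
    refine Finset.sum_congr rfl fun x _ => ?_
    rw [Finset.mul_sum, ← Finset.sum_sub_distrib, ← Finset.sum_add_distrib]
    refine Finset.sum_congr rfl fun z _ => ?_
    ring
  have hA : ∑ x, p x * a x ^ 2 = ∑ x, dp x ^ 2 / p x := by simp_rw [hpa2]
  have h2 : 2 * ∑ x, ∑ z, p x * p z * (max (a x - a z) 0) ^ 2
      = 2 * ∑ x, dp x ^ 2 / p x := by
    rw [hdouble, hexpand, hsuma, hpsum, hA]
    ring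
  linarith [h2]
end

section
/- Let p be a probability mass function on a finite set T, x₁ ∈ T, and Ω = arccos(√p(x₁)) ∈ (0, π/2]. Define a_t(x) = (sin((1−t)Ω)/sin Ω)√p(x) + (sin(tΩ)/sin Ω)·δ_{x₁}(x). Then for all x ∈ T, a_t(x)^2 = (sin²((1−t)Ω)/sin²Ω) p(x) + (1 − sin²((1−t)Ω)/sin²Ω) δ_{x₁}(x). That is, the kinetic-optimal probability path between p and the delta at x₁ is a mixture path with scheduler κ_t = 1 − sin²((1−t)Ω)/sin²Ω. -/
open Finset Real

/-! At the target point the slerp amplitude is `cos ((1 - t) Ω)`: with `u = (1 - t) Ω` the addition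
formula gives `sin u cos Ω + sin (Ω - u) = sin Ω cos u`, and the mixture weights add up to
`1 - sin² u` once `p x₁ = cos² Ω` is rewritten as `1 - sin² Ω`. -/

theorem Real.sin_mul_cos_add_sin_sub (Ω u : ℝ) : sin u * cos Ω + sin (Ω - u) = sin Ω * cos u := by
  rw [sin_sub]
  ring

theorem Real.slerp_sq_eq_mixture {Ω : ℝ} (hΩ : sin Ω ≠ 0) (u : ℝ) :
    (sin u / sin Ω * cos Ω + sin (Ω - u) / sin Ω) ^ 2
      = sin u ^ 2 / sin Ω ^ 2 * cos Ω ^ 2 + (1 - sin u ^ 2 / sin Ω ^ 2) := by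
  have amplitude : sin u / sin Ω * cos Ω + sin (Ω - u) / sin Ω = cos u := by
    rw [div_mul_eq_mul_div, ← add_div, sin_mul_cos_add_sin_sub, mul_div_cancel_left₀ _ hΩ]
  have weights : sin u ^ 2 / sin Ω ^ 2 * cos Ω ^ 2 + (1 - sin u ^ 2 / sin Ω ^ 2) = 1 - sin u ^ 2 := by
    rw [cos_sq' Ω]
    field_simp
    ring
  rw [amplitude, weights, cos_sq']

theorem kinetic_optimal_path_is_mixture_general {T : Type*} [DecidableEq T]
    (p : T → ℝ) (x₁ : T)
    (hp : ∀ x, 0 ≤ p x) (hplt : p x₁ < 1)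
    (Ω : ℝ) (hΩ : Ω = Real.arccos (Real.sqrt (p x₁))) :
    ∀ t ∈ Set.Icc (0:ℝ) 1, ∀ x : T,
      (Real.sin ((1 - t) * Ω) / Real.sin Ω * Real.sqrt (p x)
        + Real.sin (t * Ω) / Real.sin Ω * (if x = x₁ then (1:ℝ) else 0)) ^ 2
      = Real.sin ((1 - t) * Ω) ^ 2 / Real.sin Ω ^ 2 * p x
        + (1 - Real.sin ((1 - t) * Ω) ^ 2 / Real.sin Ω ^ 2)
            * (if x = x₁ then (1:ℝ) else 0) := by
  intro t _ x
  have hcos : cos Ω = √(p x₁) := by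
    rw [hΩ, cos_arccos (by linarith [sqrt_nonneg (p x₁)]) (sqrt_le_one.mpr hplt.le)]
  have hp₁ : p x₁ = cos Ω ^ 2 := by rw [hcos, sq_sqrt (hp x₁)]
  have hsin : sin Ω ≠ 0 := by
    intro h
    have := sin_sq_add_cos_sq Ω
    rw [h, ← hp₁] at this
    linarith
  by_cases hx : x = x₁
  · subst hx
    simp only [if_true, mul_one]
    rw [← hcos, hp₁, show t * Ω = Ω - (1 - t) * Ω by ring]
    exact slerp_sq_eq_mixture hsin _
  · simp only [hx, if_false, mul_zero, add_zero, mul_pow, div_pow, sq_sqrt (hp x)]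

/-- The kinetic optimal path between `p` and `δ_{x₁}` is a mixture path with
scheduler `κ_t = 1 - sin²((1-t)Ω)/sin²Ω` where `Ω = arccos √(p x₁)`. -/
theorem kinetic_optimal_path_is_mixture {T : Type*} [Fintype T] [DecidableEq T]
    (p : T → ℝ) (x₁ : T)
    (hp : ∀ x, 0 ≤ p x) (hpsum : ∑ x, p x = 1) (hplt : p x₁ < 1)
    (Ω : ℝ) (hΩ : Ω = Real.arccos (Real.sqrt (p x₁)))
    (hΩpos : 0 < Ω) (hΩle : Ω ≤ Real.pi / 2) :
    ∀ t ∈ Set.Icc (0:ℝ) 1, ∀ x : T,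
      (Real.sin ((1 - t) * Ω) / Real.sin Ω * Real.sqrt (p x)
        + Real.sin (t * Ω) / Real.sin Ω * (if x = x₁ then (1:ℝ) else 0)) ^ 2
      = Real.sin ((1 - t) * Ω) ^ 2 / Real.sin Ω ^ 2 * p x
        + (1 - Real.sin ((1 - t) * Ω) ^ 2 / Real.sin Ω ^ 2)
            * (if x = x₁ then (1:ℝ) else 0) :=
  kinetic_optimal_path_is_mixture_general p x₁ hp hplt Ω hΩ
end

section
/- Let T be a finite set, p a probability mass function on T, x₁ ∈ T, and κ : [0,1] → [0,1) a differentiable scheduler with κ_0 = 0. Define the mixture path p_t(x) = (1−κ_t)p(x) + κ_t δ_{x₁}(x). Then the flux j_t(x,z) = [p_t(z)∂_t p_t(x) − p_t(x)∂_t p_t(z)]_+ (for x ≠ z), converted to a velocity u_t(x,z) = j_t(x,z)/p_t(z) when p_t(z) > 0, satisfies u_t(x,z) = (κ̇_t/(1−κ_t))(δ_{x₁}(x) − δ_z(x)) for all x ≠ z with p_t(z) > 0, assuming κ̇_t ≥ 0. -/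
/-!
Along the mixture path `∂_t p_t = κ̇ (δ_{x₁} - p) = (κ̇/(1 - κ)) (δ_{x₁} - p_t)`, so in the cross term
`p_t z ∂_t p_t x - p_t x ∂_t p_t z` the `p_t z p_t x` parts cancel and it equals
`(κ̇/(1 - κ)) (p_t z δ_{x₁} x - p_t x δ_{x₁} z)`. For `x ≠ z` at most one of `δ_{x₁} x`, `δ_{x₁} z` is
nonzero, so the positive part of the latter is `p_t z` if `x = x₁` and `0` otherwise.
-/

theorem mixture_cross_term_mul_one_sub {R : Type*} [CommRing R] {α : Type*}
    (p δ : α → R) (κ κ' : R) (x z : α) :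
    (((1 - κ) * p z + κ * δ z) * (κ' * (δ x - p x))
        - ((1 - κ) * p x + κ * δ x) * (κ' * (δ z - p z))) * (1 - κ)
      = κ' * (((1 - κ) * p z + κ * δ z) * δ x - ((1 - κ) * p x + κ * δ x) * δ z) := by
  ring

theorem max_cross_term_indicator_div {K : Type*} [Field K] [LinearOrder K] [IsStrictOrderedRing K]
    {α : Type*} [DecidableEq α] (q : α → K) (hq : ∀ x, 0 ≤ q x) (a : α) {x z : α}
    (hxz : x ≠ z) (hz : 0 < q z) :
    max (q z * (if x = a then 1 else 0) - q x * (if z = a then 1 else 0)) 0 / q z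
      = if x = a then 1 else 0 := by
  by_cases hx : x = a
  · subst hx
    simp [Ne.symm hxz, hz.le, hz.ne']
  · have : 0 ≤ q x * (if z = a then 1 else 0) := mul_nonneg (hq x) (by split_ifs <;> norm_num)
    rw [if_neg hx, mul_zero, zero_sub, max_eq_right (neg_nonpos.mpr this), zero_div]

theorem mixture_path_velocity_general {T : Type*} [DecidableEq T]
    (p : T → ℝ) (x₁ : T)
    (hp : ∀ x, 0 ≤ p x)
    (κ κ' : ℝ) (hκ0 : 0 ≤ κ) (hκ1 : κ < 1) (hκ' : 0 ≤ κ')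
    (pt dpt : T → ℝ) (j : T → T → ℝ)
    (hpt : ∀ x, pt x = (1 - κ) * p x + κ * (if x = x₁ then (1:ℝ) else 0))
    (hdpt : ∀ x, dpt x = κ' * ((if x = x₁ then (1:ℝ) else 0) - p x))
    (hj : ∀ x z, j x z = max (pt z * dpt x - pt x * dpt z) 0) :
    ∀ x z, x ≠ z → 0 < pt z →
      j x z / pt z
        = κ' / (1 - κ) * ((if x = x₁ then (1:ℝ) else 0)
            - (if x = z then (1:ℝ) else 0)) := by
  intro x z hxz hz
  set δ : T → ℝ := fun y ↦ if y = x₁ then 1 else 0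
  have hκ : 1 - κ ≠ 0 := by linarith
  have hpt_nonneg : ∀ y, 0 ≤ pt y := fun y ↦ by
    rw [hpt y]
    exact add_nonneg (mul_nonneg (by linarith) (hp y)) (mul_nonneg hκ0 (by split_ifs <;> norm_num))
  have hcross : pt z * dpt x - pt x * dpt z = κ' / (1 - κ) * (pt z * δ x - pt x * δ z) := by
    rw [div_mul_eq_mul_div, eq_div_iff hκ, hpt, hpt, hdpt, hdpt]
    exact mixture_cross_term_mul_one_sub p δ κ κ' x z
  have hmax : max (κ' / (1 - κ) * (pt z * δ x - pt x * δ z)) 0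
      = κ' / (1 - κ) * max (pt z * δ x - pt x * δ z) 0 := by
    simpa using (mul_max_of_nonneg _ 0 (div_nonneg hκ' (by linarith : 0 ≤ 1 - κ))).symm
  rw [hj, hcross, hmax, mul_div_assoc,
    max_cross_term_indicator_div pt hpt_nonneg x₁ hxz hz, if_neg hxz, sub_zero]

/-- For mixture paths, the velocity obtained from the kinetic-optimal flux
`j x z = [p_t z * ∂p_t x - p_t x * ∂p_t z]₊` equals
`(κ̇/(1-κ)) (δ_{x₁}(x) - δ_z(x))` for `x ≠ z` with `p_t z > 0`. -/
theorem mixture_path_velocity {T : Type*} [Fintype T] [DecidableEq T]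
    (p : T → ℝ) (x₁ : T)
    (hp : ∀ x, 0 ≤ p x) (hpsum : ∑ x, p x = 1)
    (κ κ' : ℝ) (hκ0 : 0 ≤ κ) (hκ1 : κ < 1) (hκ' : 0 ≤ κ')
    (pt dpt : T → ℝ) (j : T → T → ℝ)
    (hpt : ∀ x, pt x = (1 - κ) * p x + κ * (if x = x₁ then (1:ℝ) else 0))
    (hdpt : ∀ x, dpt x = κ' * ((if x = x₁ then (1:ℝ) else 0) - p x))
    (hj : ∀ x z, j x z = max (pt z * dpt x - pt x * dpt z) 0) :
    ∀ x z, x ≠ z → 0 < pt z →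
      j x z / pt z
        = κ' / (1 - κ) * ((if x = x₁ then (1:ℝ) else 0)
            - (if x = z then (1:ℝ) else 0)) :=
  mixture_path_velocity_general p x₁ hp κ κ' hκ0 hκ1 hκ' pt dpt j hpt hdpt hj
end

section
/- Let T be a finite set, p a probability mass function on T, x₁ ∈ T with p(x₁) < 1, and κ : [0,1) → [0,1) differentiable with κ̇_t ≥ 0. Define p_t(x) = (1−κ_t)p(x) + κ_t δ_{x₁}(x) and, for x ≠ z, u_t(x,z) = (κ̇_t/(1−κ_t))(δ_{x₁}(x) − δ_z(x)), and u_t(z,z) = −Σ_{x≠z} u_t(x,z). Then u_t generates p_t, i.e., ∂_t p_t(x) = Σ_{z∈T} u_t(x,z) p_t(z) for all x ∈ T. -/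
/-!
Writing `c = κ' / (1 - κ)` and `δ = 𝟙{· = x₁}`, the diagonal convention makes every column of `u`
sum to zero, which forces `u x z = c (δ x - 𝟙{x = z})` on the diagonal too. Hence
`∑ z, u x z * pt z = c (δ x - pt x)` because `pt` sums to one, and
`c (δ x - pt x) = c (1 - κ) (δ x - p x) = κ' (δ x - p x)`.
-/

open Finset

section RateMatrix

variable {T : Type*} [Fintype T] [DecidableEq T]

theorem eq_of_offDiag_eq_of_sum_col_eq_zero {R : Type*} [AddCommGroup R] {u v : T → T → R}
    (hoff : ∀ x z, x ≠ z → u x z = v x z)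
    (hdiag : ∀ z, u z z = -∑ x ∈ univ.erase z, u x z) (hv : ∀ z, ∑ x, v x z = 0) :
    u = v := by
  funext x z
  obtain rfl | hxz := eq_or_ne x z
  · have hcol : ∑ y ∈ univ.erase x, v y x + v x x = 0 := by
      rw [sum_erase_add _ _ (mem_univ x), hv]
    rw [hdiag, sum_congr rfl fun y hy => hoff y x (ne_of_mem_erase hy)]
    exact neg_eq_of_add_eq_zero_right hcol
  · exact hoff x z hxz

def mixtureVelocity (c : ℝ) (q : T → ℝ) (x z : T) : ℝ :=
  c * (q x - if x = z then 1 else 0)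

theorem sum_mixtureVelocity_col {q : T → ℝ} (hq : ∑ x, q x = 1) (c : ℝ) (z : T) :
    ∑ x, mixtureVelocity c q x z = 0 := by
  simp [mixtureVelocity, ← mul_sum, sum_sub_distrib, hq]

theorem sum_mixtureVelocity_mul {π : T → ℝ} (hπ : ∑ z, π z = 1) (c : ℝ) (q : T → ℝ) (x : T) :
    ∑ z, mixtureVelocity c q x z * π z = c * (q x - π x) := by
  simp [mixtureVelocity, mul_assoc, ← mul_sum, sub_mul, sum_sub_distrib, hπ]

end RateMatrix

theorem mixture_velocity_generates_general {T : Type*} [Fintype T] [DecidableEq T]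
    (p : T → ℝ) (x₁ : T)
    (hpsum : ∑ x, p x = 1)
    (κ κ' : ℝ) (hκ1 : κ < 1)
    (pt dpt : T → ℝ) (u : T → T → ℝ)
    (hpt : ∀ x, pt x = (1 - κ) * p x + κ * (if x = x₁ then (1:ℝ) else 0))
    (hdpt : ∀ x, dpt x = κ' * ((if x = x₁ then (1:ℝ) else 0) - p x))
    (hu_off : ∀ x z, x ≠ z →
      u x z = κ' / (1 - κ) * ((if x = x₁ then (1:ℝ) else 0)
                - (if x = z then (1:ℝ) else 0)))
    (hu_diag : ∀ z, u z z = - ∑ x ∈ Finset.univ.erase z, u x z) :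
    ∀ x, dpt x = ∑ z, u x z * pt z := by
  have hu : u = mixtureVelocity (κ' / (1 - κ)) (fun y => if y = x₁ then 1 else 0) :=
    eq_of_offDiag_eq_of_sum_col_eq_zero hu_off hu_diag (sum_mixtureVelocity_col (by simp) _)
  have hpt_sum : ∑ z, pt z = 1 := by
    simp [hpt, sum_add_distrib, ← mul_sum, hpsum]
  have hκ : 1 - κ ≠ 0 := by linarith
  intro x
  rw [hu, sum_mixtureVelocity_mul hpt_sum, hdpt, hpt]
  field_simp
  ring

/-- The mixture-path velocity generates the mixture probability path:
the Kolmogorov forward equation holds. -/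
theorem mixture_velocity_generates {T : Type*} [Fintype T] [DecidableEq T]
    (p : T → ℝ) (x₁ : T)
    (hp : ∀ x, 0 ≤ p x) (hpsum : ∑ x, p x = 1) (hplt : p x₁ < 1)
    (κ κ' : ℝ) (hκ0 : 0 ≤ κ) (hκ1 : κ < 1) (hκ' : 0 ≤ κ')
    (pt dpt : T → ℝ) (u : T → T → ℝ)
    (hpt : ∀ x, pt x = (1 - κ) * p x + κ * (if x = x₁ then (1:ℝ) else 0))
    (hdpt : ∀ x, dpt x = κ' * ((if x = x₁ then (1:ℝ) else 0) - p x))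
    (hu_off : ∀ x z, x ≠ z →
      u x z = κ' / (1 - κ) * ((if x = x₁ then (1:ℝ) else 0)
                - (if x = z then (1:ℝ) else 0)))
    (hu_diag : ∀ z, u z z = - ∑ x ∈ Finset.univ.erase z, u x z) :
    ∀ x, dpt x = ∑ z, u x z * pt z :=
  mixture_velocity_generates_general p x₁ hpsum κ κ' hκ1 pt dpt u hpt hdpt hu_off hu_diag
end

section
/- Let T be a finite set with |T| = K, and let p_t be a strictly positive differentiable probability path on T. Define the flux j_t(x,z) = (1/K)[∂_t p_t(x) − ∂_t p_t(z)]_+ for x ≠ z. Then j_t is non-negative and satisfies the discrete continuity equation Σ_{z≠x} j_t(z,x) − Σ_{z≠x} j_t(x,z) = −∂_t p_t(x) for all x. -/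
open Finset

theorem max_sub_zero_sub_max_sub_zero {α : Type*} [AddGroup α] [LinearOrder α]
    [AddLeftMono α] (a b : α) :
    max (a - b) 0 - max (b - a) 0 = a - b := by
  rw [← neg_sub a b, max_zero_sub_max_neg_zero_eq_self]

theorem sum_erase_sub_eq_sum_sub_card_nsmul {T M : Type*} [Fintype T] [DecidableEq T]
    [AddCommGroup M] (f : T → M) (x : T) :
    ∑ z ∈ univ.erase x, (f z - f x) = ∑ z, f z - Fintype.card T • f x := by
  rw [sum_erase (f := fun z => f z - f x) univ (sub_self (f x)), sum_sub_distrib, sum_const,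
    card_univ]

theorem uniform_weight_flux_continuity_general {T : Type*} [Fintype T] [DecidableEq T]
    (dp : T → ℝ)
    (hdpsum : ∑ x, dp x = 0)
    (j : T → T → ℝ)
    (hj : ∀ x z, j x z = (1 / (Fintype.card T : ℝ)) * max (dp x - dp z) 0) :
    (∀ x z, 0 ≤ j x z) ∧
    (∀ x, ((∑ z ∈ Finset.univ.erase x, j z x)
        - ∑ z ∈ Finset.univ.erase x, j x z) = - dp x) := by
  refine ⟨fun x z => by rw [hj]; positivity, fun x => ?_⟩
  have hK : (Fintype.card T : ℝ) ≠ 0 := by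
    have : Nonempty T := ⟨x⟩
    positivity
  have net_flux : ∀ z, j z x - j x z = (Fintype.card T : ℝ)⁻¹ * (dp z - dp x) := by
    intro z
    rw [hj, hj, ← mul_sub, max_sub_zero_sub_max_sub_zero, one_div]
  rw [← sum_sub_distrib, sum_congr rfl fun z _ => net_flux z, ← mul_sum,
    sum_erase_sub_eq_sum_sub_card_nsmul, hdpsum, nsmul_eq_mul, zero_sub, mul_neg,
    inv_mul_cancel_left₀ hK]

/-- The flux `j x z = (1/K) [dp x - dp z]₊` is non-negative and satisfies the
discrete continuity equation. -/
theorem uniform_weight_flux_continuity {T : Type*} [Fintype T] [DecidableEq T]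
    (p dp : T → ℝ)
    (hp : ∀ x, 0 < p x) (hpsum : ∑ x, p x = 1)
    (hdpsum : ∑ x, dp x = 0)
    (j : T → T → ℝ)
    (hj : ∀ x z, j x z = (1 / (Fintype.card T : ℝ)) * max (dp x - dp z) 0) :
    (∀ x z, 0 ≤ j x z) ∧
    (∀ x, ((∑ z ∈ Finset.univ.erase x, j z x)
        - ∑ z ∈ Finset.univ.erase x, j x z) = - dp x) :=
  uniform_weight_flux_continuity_general dp hdpsum j hj
end

section
/- Let T be a finite set, p_t a probability path on T, and for each x₁ ∈ T let u_t(·,·|x₁) be a rate matrix on T generating the conditional path p_t(·|x₁), i.e., ∂_t p_t(x|x₁) = Σ_z u_t(x,z|x₁) p_t(z|x₁). Let q be a probability mass function on T and p_t(x) = Σ_{x₁} p_t(x|x₁) q(x₁). Define the posterior p_{1|t}(x₁|z) = p_t(z|x₁)q(x₁)/p_t(z) when p_t(z) > 0, and the marginal velocity u_t(x,z) = Σ_{x₁} u_t(x,z|x₁) p_{1|t}(x₁|z). Then u_t generates p_t: ∂_t p_t(x) = Σ_z u_t(x,z) p_t(z) for all x with the convention that terms with p_t(z) = 0 vanish. 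-/
open Finset

/-! Multiplying the posterior `p_t(z|x₁) q(x₁) / p_t(z)` back by `p_t(z)` recovers the joint
weight `p_t(z|x₁) q(x₁)`, also when `p_t(z) = 0` since the joint weight then vanishes; after that
the marginal generator equation is the conditional one averaged over `q`, with the two sums
exchanged. -/

theorem ite_pos_sum_mul_div_mul_eq {ι : Type*} (s : Finset ι) (f w : ι → ℝ) {c : ℝ}
    (hc : 0 ≤ c) (hw : c = 0 → ∀ i ∈ s, w i = 0) :
    (if 0 < c then (∑ i ∈ s, f i * (w i / c)) * c else 0) = ∑ i ∈ s, f i * w i := by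
  rcases hc.lt_or_eq with hpos | hzero
  · rw [if_pos hpos, sum_mul]
    exact sum_congr rfl fun i _ => by field_simp
  · rw [if_neg hzero.not_lt]
    exact (sum_eq_zero fun i hi => by rw [hw hzero.symm i hi, mul_zero]).symm

theorem marginal_velocity_generates_general {T : Type*} [Fintype T]
    (pc dpc : T → T → ℝ)     -- pc x x₁ = p_t(x | x₁), dpc its time derivative
    (uc : T → T → T → ℝ)     -- uc x z x₁ = u_t(x, z | x₁)
    (q pm dpm : T → ℝ)
    (hq : ∀ x₁, 0 ≤ q x₁)
    (hpc : ∀ x₁ x, 0 ≤ pc x x₁)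
    (hgen : ∀ x₁ x, dpc x x₁ = ∑ z, uc x z x₁ * pc z x₁)
    (hpm : ∀ x, pm x = ∑ x₁, pc x x₁ * q x₁)
    (hdpm : ∀ x, dpm x = ∑ x₁, dpc x x₁ * q x₁)
    (hsafe : ∀ z x₁, pm z = 0 → pc z x₁ = 0) :
    ∀ x, dpm x
      = ∑ z, if 0 < pm z then
          (∑ x₁, uc x z x₁ * (pc z x₁ * q x₁ / pm z)) * pm z
        else 0 := by
  intro x
  have hpm_nonneg (z : T) : 0 ≤ pm z :=
    (hpm z).symm ▸ sum_nonneg fun x₁ _ => mul_nonneg (hpc x₁ z) (hq x₁)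
  calc dpm x = ∑ x₁, (∑ z, uc x z x₁ * pc z x₁) * q x₁ := by simp only [hdpm, hgen]
    _ = ∑ z, ∑ x₁, uc x z x₁ * (pc z x₁ * q x₁) := by
      simp only [sum_mul, mul_assoc]
      exact sum_comm
    _ = _ := sum_congr rfl fun z _ =>
      (ite_pos_sum_mul_div_mul_eq _ _ _ (hpm_nonneg z)
        fun hz x₁ _ => by rw [hsafe z x₁ hz, zero_mul]).symm

/-- The marginal velocity obtained by averaging conditional velocities against
the posterior generates the marginal probability path (terms with
`p_t(z) = 0` vanish by convention). -/
theorem marginal_velocity_generates {T : Type*} [Fintype T] [DecidableEq T]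
    (pc dpc : T → T → ℝ)     -- pc x x₁ = p_t(x | x₁), dpc its time derivative
    (uc : T → T → T → ℝ)     -- uc x z x₁ = u_t(x, z | x₁)
    (q pm dpm : T → ℝ)
    (hq : ∀ x₁, 0 ≤ q x₁) (hqsum : ∑ x₁, q x₁ = 1)
    (hpc : ∀ x₁ x, 0 ≤ pc x x₁)
    (hgen : ∀ x₁ x, dpc x x₁ = ∑ z, uc x z x₁ * pc z x₁)
    (hpm : ∀ x, pm x = ∑ x₁, pc x x₁ * q x₁)
    (hdpm : ∀ x, dpm x = ∑ x₁, dpc x x₁ * q x₁)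
    (hsafe : ∀ z x₁, pm z = 0 → pc z x₁ = 0) :
    ∀ x, dpm x
      = ∑ z, if 0 < pm z then
          (∑ x₁, uc x z x₁ * (pc z x₁ * q x₁ / pm z)) * pm z
        else 0 :=
  marginal_velocity_generates_general pc dpc uc q pm dpm hq hpc hgen hpm hdpm hsafe
end
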